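/- Let X = (0,∞) with Lebesgue measure, 1 ≤ a < b < ∞, and let ψ : (a,b) → (0,∞) be continuous with inf_{p∈(a,b)} ψ(p) > 0 and such that there exists a measurable f₀ : (0,∞) → ℝ with |f₀|_p = ψ(p) for every p ∈ (a,b). For s > 0 let σ_s f (x) = f(x/s) and N(s) = sup { ‖σ_s f‖_{G(ψ)} : f measurable, ‖f‖_{G(ψ)} ≤ 1 }. Then lim_{s→0+} log N(s)/log s = 1/b and lim_{s→∞} log N(s)/log s = 1/a; i.e. the Boyd indices of the Grand Lebesgue space G(ψ,a,b) are γ₁ = 1/b and γ₂ = 1/a. -/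

import Mathlib

/-! Dilation by `s` multiplies every `L^p` norm by `s^{1/p}`, so `σ_s` has norm at most
`sup_{p ∈ (a,b)} s^{1/p}` on `G(ψ)`, and `f₀`, whose grand norm is `1`, attains this bound.
The supremum is `s^{1/b}` for `s < 1` and `s^{1/a}` for `s > 1`, so `log N(s) / log s` is
constant near `0` and near `∞`. -/

open MeasureTheory Filter Set
open scoped ENNReal Topology

noncomputable section

/-- The `L_p` norm on `(0,∞)` with Lebesgue measure. -/
def lpNorm (f : ℝ → ℝ) (p : ℝ) : ℝ≥0∞ :=
  (∫⁻ x, ENNReal.ofReal (|f x| ^ p) ∂(volume.restrict (Set.Ioi (0 : ℝ)))) ^ (1 / p)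

/-- The Grand Lebesgue norm on `(0,∞)`: `‖f‖_{G(ψ)} = sup_{p∈(a,b)} |f|_p/ψ(p)`. -/
def grandNorm (ψ : ℝ → ℝ) (a b : ℝ) (f : ℝ → ℝ) : ℝ≥0∞ :=
  ⨆ p ∈ Set.Ioo a b, lpNorm f p / ENNReal.ofReal (ψ p)

/-- The operator norm of the dilation `σ_s f(x) = f(x/s)` acting on `G(ψ)`. -/
def dilNorm (ψ : ℝ → ℝ) (a b : ℝ) (s : ℝ) : ℝ≥0∞ :=
  ⨆ (f : ℝ → ℝ) (_ : Measurable f ∧ grandNorm ψ a b f ≤ 1),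
    grandNorm ψ a b (fun x => f (x / s))

theorem biSup_eq_of_mem_closure {X α : Type*} [TopologicalSpace X] [CompleteLinearOrder α]
    [TopologicalSpace α] [OrderTopology α] {S : Set X} {g : X → α} {q : X}
    (hq : q ∈ closure S) (hle : ∀ p ∈ S, g p ≤ g q) (hg : ContinuousWithinAt g S q) :
    ⨆ p ∈ S, g p = g q := by
  rw [← sSup_image]
  exact (isLUB_of_mem_closure (forall_mem_image.mpr hle) (hg.mem_closure_image hq)).sSup_eq

theorem lintegral_Ioi_comp_div (g : ℝ → ℝ≥0∞) {s : ℝ} (hs : 0 < s) :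
    ∫⁻ x in Ioi (0 : ℝ), g (x / s) = ENNReal.ofReal s * ∫⁻ x in Ioi (0 : ℝ), g x := by
  have hemb : MeasurableEmbedding (fun x : ℝ => x / s) := by
    simpa only [div_eq_mul_inv] using measurableEmbedding_mulRight₀ (inv_ne_zero hs.ne')
  have hpre : (fun x : ℝ => x / s) ⁻¹' Ioi 0 = Ioi 0 := by
    ext x
    simp [div_pos_iff_of_pos_right hs]
  have hmap : Measure.map (fun x : ℝ => x / s) volume = ENNReal.ofReal s • volume := by
    simp only [div_eq_mul_inv]
    rw [Real.map_volume_mul_right (inv_ne_zero hs.ne'), inv_inv, abs_of_pos hs]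
  have hmap_restrict : Measure.map (fun x : ℝ => x / s) (volume.restrict (Ioi 0))
      = ENNReal.ofReal s • volume.restrict (Ioi (0 : ℝ)) := by
    conv_lhs => rw [← hpre]
    rw [← Measure.restrict_map hemb.measurable measurableSet_Ioi, hmap, Measure.restrict_smul]
  rw [← hemb.lintegral_map, hmap_restrict, lintegral_smul_measure, smul_eq_mul]

theorem lpNorm_comp_div (f : ℝ → ℝ) {s p : ℝ} (hs : 0 < s) (hp : 0 ≤ p) :
    lpNorm (fun x => f (x / s)) p = ENNReal.ofReal (s ^ (1 / p)) * lpNorm f p := by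
  rw [_root_.lpNorm, _root_.lpNorm, lintegral_Ioi_comp_div (fun y => ENNReal.ofReal (|f y| ^ p)) hs,
    ENNReal.mul_rpow_of_nonneg _ _ (by positivity), ENNReal.ofReal_rpow_of_pos hs]

theorem grandNorm_comp_div (ψ : ℝ → ℝ) {a : ℝ} (b : ℝ) (f : ℝ → ℝ) (ha : 0 ≤ a) {s : ℝ}
    (hs : 0 < s) :
    grandNorm ψ a b (fun x => f (x / s))
      = ⨆ p ∈ Ioo a b, ENNReal.ofReal (s ^ (1 / p)) * (lpNorm f p / ENNReal.ofReal (ψ p)) := by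
  refine biSup_congr fun p hp => ?_
  rw [lpNorm_comp_div f hs (ha.trans hp.1.le), mul_div_assoc]

theorem dilNorm_eq_biSup {a b : ℝ} (ha : 0 ≤ a) {ψ : ℝ → ℝ}
    (hψ : ∀ p ∈ Ioo a b, 0 < ψ p) {f₀ : ℝ → ℝ} (hf₀m : Measurable f₀)
    (hf₀ : ∀ p ∈ Ioo a b, lpNorm f₀ p = ENNReal.ofReal (ψ p)) {s : ℝ} (hs : 0 < s) :
    dilNorm ψ a b s = ⨆ p ∈ Ioo a b, ENNReal.ofReal (s ^ (1 / p)) := by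
  have ratio_f₀ : ∀ p ∈ Ioo a b, lpNorm f₀ p / ENNReal.ofReal (ψ p) = 1 := fun p hp => by
    rw [hf₀ p hp]
    exact ENNReal.div_self (ENNReal.ofReal_pos.mpr (hψ p hp)).ne' ENNReal.ofReal_ne_top
  apply le_antisymm
  · refine iSup₂_le fun f hf => ?_
    rw [grandNorm_comp_div ψ b f ha hs]
    exact iSup₂_mono fun p hp =>
      mul_le_of_le_one_right' ((le_iSup₂ (f := fun p (_ : p ∈ Ioo a b) =>
        lpNorm f p / ENNReal.ofReal (ψ p)) p hp).trans hf.2)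
  · have hσf₀ : grandNorm ψ a b (fun x => f₀ (x / s))
        = ⨆ p ∈ Ioo a b, ENNReal.ofReal (s ^ (1 / p)) := by
      rw [grandNorm_comp_div ψ b f₀ ha hs]
      exact biSup_congr fun p hp => by rw [ratio_f₀ p hp, mul_one]
    have hf₀_unit : grandNorm ψ a b f₀ ≤ 1 := iSup₂_le fun p hp => (ratio_f₀ p hp).le
    exact hσf₀ ▸ le_iSup₂ (f := fun f (_ : Measurable f ∧ grandNorm ψ a b f ≤ 1) =>
      grandNorm ψ a b (fun x => f (x / s))) f₀ ⟨hf₀m, hf₀_unit⟩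

theorem continuousAt_ofReal_rpow_one_div {s q : ℝ} (hs : s ≠ 0) (hq : q ≠ 0) :
    ContinuousAt (fun p : ℝ => ENNReal.ofReal (s ^ (1 / p))) q :=
  ENNReal.continuous_ofReal.continuousAt.comp <|
    (Real.continuousAt_const_rpow hs).comp (continuousAt_const.div continuousAt_id hq)

theorem biSup_Ioo_ofReal_rpow_one_div_of_lt_one {a b : ℝ} (ha : 0 < a) (hab : a < b) {s : ℝ}
    (hs0 : 0 < s) (hs1 : s < 1) :
    ⨆ p ∈ Ioo a b, ENNReal.ofReal (s ^ (1 / p)) = ENNReal.ofReal (s ^ (1 / b)) :=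
  biSup_eq_of_mem_closure (by simp [closure_Ioo hab.ne, hab.le])
    (fun p hp => ENNReal.ofReal_le_ofReal <| Real.rpow_le_rpow_of_exponent_ge hs0 hs1.le
      (one_div_le_one_div_of_le (ha.trans hp.1) hp.2.le))
    (continuousAt_ofReal_rpow_one_div hs0.ne' (ha.trans hab).ne').continuousWithinAt

theorem biSup_Ioo_ofReal_rpow_one_div_of_one_lt {a b : ℝ} (ha : 0 < a) (hab : a < b) {s : ℝ}
    (hs1 : 1 < s) :
    ⨆ p ∈ Ioo a b, ENNReal.ofReal (s ^ (1 / p)) = ENNReal.ofReal (s ^ (1 / a)) :=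
  biSup_eq_of_mem_closure (by simp [closure_Ioo hab.ne, hab.le])
    (fun p hp => ENNReal.ofReal_le_ofReal <| Real.rpow_le_rpow_of_exponent_le hs1.le
      (one_div_le_one_div_of_le ha hp.1.le))
    (continuousAt_ofReal_rpow_one_div (zero_lt_one.trans hs1).ne' ha.ne').continuousWithinAt

theorem log_toReal_ofReal_rpow_div_log {s : ℝ} (hs0 : 0 < s) (hs1 : s ≠ 1) (r : ℝ) :
    Real.log (ENNReal.ofReal (s ^ r)).toReal / Real.log s = r := by
  rw [ENNReal.toReal_ofReal (Real.rpow_nonneg hs0.le r), Real.log_rpow hs0,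
    mul_div_cancel_right₀ r (Real.log_ne_zero_of_pos_of_ne_one hs0 hs1)]

theorem boyd_indices_grand_general (a b : ℝ) (ha : 1 ≤ a) (hab : a < b)
    (ψ : ℝ → ℝ)
    (hψinf : ∃ c : ℝ, 0 < c ∧ ∀ p ∈ Set.Ioo a b, c ≤ ψ p)
    (f₀ : ℝ → ℝ) (hf₀m : Measurable f₀)
    (hf₀ : ∀ p ∈ Set.Ioo a b, lpNorm f₀ p = ENNReal.ofReal (ψ p)) :
    Tendsto (fun s : ℝ => Real.log (dilNorm ψ a b s).toReal / Real.log s)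
      (𝓝[>] 0) (𝓝 (1 / b)) ∧
    Tendsto (fun s : ℝ => Real.log (dilNorm ψ a b s).toReal / Real.log s)
      atTop (𝓝 (1 / a)) := by
  obtain ⟨c, hc, hcψ⟩ := hψinf
  have hψ : ∀ p ∈ Ioo a b, 0 < ψ p := fun p hp => hc.trans_le (hcψ p hp)
  have ha0 : 0 < a := zero_lt_one.trans_le ha
  refine ⟨tendsto_const_nhds.congr' ?_, tendsto_const_nhds.congr' ?_⟩
  · filter_upwards [Ioo_mem_nhdsGT zero_lt_one] with s ⟨hs0, hs1⟩
    rw [dilNorm_eq_biSup ha0.le hψ hf₀m hf₀ hs0,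
      biSup_Ioo_ofReal_rpow_one_div_of_lt_one ha0 hab hs0 hs1,
      log_toReal_ofReal_rpow_div_log hs0 hs1.ne]
  · filter_upwards [eventually_gt_atTop 1] with s hs1
    have hs0 : 0 < s := zero_lt_one.trans hs1
    rw [dilNorm_eq_biSup ha0.le hψ hf₀m hf₀ hs0,
      biSup_Ioo_ofReal_rpow_one_div_of_one_lt ha0 hab hs1,
      log_toReal_ofReal_rpow_div_log hs0 hs1.ne']

/-- The Boyd indices of the Grand Lebesgue space `G(ψ, a, b)` on `(0,∞)` are
`γ₁ = 1/b` and `γ₂ = 1/a`. -/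
theorem boyd_indices_grand (a b : ℝ) (ha : 1 ≤ a) (hab : a < b)
    (ψ : ℝ → ℝ) (hψc : ContinuousOn ψ (Set.Ioo a b))
    (hψinf : ∃ c : ℝ, 0 < c ∧ ∀ p ∈ Set.Ioo a b, c ≤ ψ p)
    (f₀ : ℝ → ℝ) (hf₀m : Measurable f₀)
    (hf₀ : ∀ p ∈ Set.Ioo a b, lpNorm f₀ p = ENNReal.ofReal (ψ p)) :
    Tendsto (fun s : ℝ => Real.log (dilNorm ψ a b s).toReal / Real.log s)
      (𝓝[>] 0) (𝓝 (1 / b)) ∧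
    Tendsto (fun s : ℝ => Real.log (dilNorm ψ a b s).toReal / Real.log s)
      atTop (𝓝 (1 / a)) :=
  boyd_indices_grand_general a b ha hab ψ hψinf f₀ hf₀m hf₀

end
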